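/- The subdivision $S(K_4)$ of the complete graph $K_4$ is not $\Theta$-graceful; concretely, there is no bijection $f$ from the 10 vertices of $S(K_4)$ onto $\{0,1,\dots,9\}$ such that for each original vertex $u_i$ of $K_4$ the three edges $u_i w_{ij}$ ($j \neq i$) all receive the same edge label $a_i = |f(u_i)-f(w_{ij})|$, and the four values $a_1, a_2, a_3, a_4$ are pairwise distinct. -/
import Mathlib


/-- The label of vertex `i` of `S(K₄)` as an integer.  The vertices of `S(K₄)` are
indexed by `Fin 10`: the original vertices `u₁, u₂, u₃, u₄` of `K₄` are
`0, 1, 2, 3` and the subdivision vertices `w₁₂, w₁₃, w₁₄, w₂₃, w₂₄, w₃₄` are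
`4, 5, 6, 7, 8, 9`. -/
def lab (f : Fin 10 → Fin 10) (i : Fin 10) : ℤ := ((f i : ℕ) : ℤ)

lemma lab_inj {f : Fin 10 → Fin 10} (hf : Function.Injective f)
    {i j : Fin 10} (h : i ≠ j) : lab f i ≠ lab f j := by
  intro hij
  exact h (hf (by unfold lab at hij; exact_mod_cast Fin.ext (by exact_mod_cast hij)))

/-- The subdivision `S(K₄)` of `K₄` is not Θ-graceful: there is no bijection `f`
of its 10 vertices onto `{0,…,9}` such that for each original vertex `uᵢ` the
three edges `uᵢ wᵢⱼ` get the same edge label `aᵢ` and `a₁, a₂, a₃, a₄` are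
pairwise distinct. -/
theorem SK4_not_theta_graceful :
    ¬ ∃ f : Fin 10 → Fin 10, Function.Bijective f ∧
      |lab f 0 - lab f 4| = |lab f 0 - lab f 5| ∧
      |lab f 0 - lab f 5| = |lab f 0 - lab f 6| ∧
      |lab f 1 - lab f 4| = |lab f 1 - lab f 7| ∧
      |lab f 1 - lab f 7| = |lab f 1 - lab f 8| ∧
      |lab f 2 - lab f 5| = |lab f 2 - lab f 7| ∧
      |lab f 2 - lab f 7| = |lab f 2 - lab f 9| ∧
      |lab f 3 - lab f 6| = |lab f 3 - lab f 8| ∧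
      |lab f 3 - lab f 8| = |lab f 3 - lab f 9| ∧
      |lab f 0 - lab f 4| ≠ |lab f 1 - lab f 4| ∧
      |lab f 0 - lab f 4| ≠ |lab f 2 - lab f 5| ∧
      |lab f 0 - lab f 4| ≠ |lab f 3 - lab f 6| ∧
      |lab f 1 - lab f 4| ≠ |lab f 2 - lab f 5| ∧
      |lab f 1 - lab f 4| ≠ |lab f 3 - lab f 6| ∧
      |lab f 2 - lab f 5| ≠ |lab f 3 - lab f 6| := by
  rintro ⟨f, hf, h1, h2, -⟩
  have h45 : lab f 4 ≠ lab f 5 := lab_inj hf.injective (by decide)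
  have h46 : lab f 4 ≠ lab f 6 := lab_inj hf.injective (by decide)
  have h56 : lab f 5 ≠ lab f 6 := lab_inj hf.injective (by decide)
  rcases abs_eq_abs.mp h1 with e1 | e1
  · exact h45 (by linarith)
  rcases abs_eq_abs.mp (h1.trans h2) with e2 | e2
  · exact h46 (by linarith)
  exact h56 (by linarith)
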